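/- arXiv:1607.02330 — 2 statements merged into one kernel-verified Lean document; each statement's English description precedes it below -/
import Mathlib

section
/- For α ∈ (0, 1/2) the map (Q_X, Q_Y) ↦ D_α(P_XY||Q_X Q_Y) fails to be convex in general: for X uniform on a set of size n ≥ 2 and Y = X (so P_XY(x,y) = (1/n)1{x=y}), the uniform product distribution gives D_α value log n, which is strictly larger than the minimum J_α(X;X) = (α/(1−α)) log n. -/
open scoped ENNReal BigOperators
open Finset

/-- Kullback-Leibler divergence between two PMFs on a finite set, valued in `EReal`
(`⊤` when `P` is not absolutely continuous w.r.t. `Q`). -/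
noncomputable def klDiv {X : Type*} [Fintype X] (P Q : X → ℝ≥0∞) : EReal :=
  if ∀ x, Q x = 0 → P x = 0 then
    (((∑ x, (P x).toReal * Real.log ((P x).toReal / (Q x).toReal)) : ℝ) : EReal)
  else ⊤

/-- Rényi divergence of order `α` (KL divergence at `α = 1`).  The ENNReal conventions
`0 * ⊤ = 0` and `0 ^ y = ⊤` for `y < 0` encode `0/0 = 0` and `p/0 = ∞`. -/
noncomputable def renyiDiv {X : Type*} [Fintype X] (α : ℝ) (P Q : X → ℝ≥0∞) : EReal :=
  if α = 1 then klDiv P Q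
  else (((α - 1)⁻¹ : ℝ) : EReal) * ENNReal.log (∑ x, P x ^ α * Q x ^ (1 - α))

/-- Relative α-entropy (Sundaresan's divergence); KL divergence at `α = 1`. -/
noncomputable def relAlphaEnt {X : Type*} [Fintype X] (α : ℝ) (P Q : X → ℝ≥0∞) : EReal :=
  if α = 1 then klDiv P Q
  else ((α / (1 - α) : ℝ) : EReal) * ENNReal.log (∑ x, P x * Q x ^ (α - 1))
    + ENNReal.log (∑ x, Q x ^ α)
    - (((1 - α)⁻¹ : ℝ) : EReal) * ENNReal.log (∑ x, P x ^ α)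

/-- The set of PMFs on a finite type, as a subtype. -/
def PMFon (X : Type*) [Fintype X] : Type _ := {p : X → ℝ≥0∞ // ∑ x, p x = 1}

noncomputable def margX {X Y : Type*} [Fintype X] [Fintype Y] (P : X × Y → ℝ≥0∞) : X → ℝ≥0∞ :=
  fun x => ∑ y, P (x, y)

noncomputable def margY {X Y : Type*} [Fintype X] [Fintype Y] (P : X × Y → ℝ≥0∞) : Y → ℝ≥0∞ :=
  fun y => ∑ x, P (x, y)

/-- Mutual information of a joint PMF. -/
noncomputable def mutualInfo {X Y : Type*} [Fintype X] [Fintype Y] (P : X × Y → ℝ≥0∞) : EReal :=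
  klDiv P (fun p => margX P p.1 * margY P p.2)

/-- The dependence measure `J_α`. -/
noncomputable def Jalpha {X Y : Type*} [Fintype X] [Fintype Y] (α : ℝ) (P : X × Y → ℝ≥0∞) :
    EReal :=
  ⨅ (Q : PMFon X × PMFon Y), renyiDiv α P (fun p => Q.1.1 p.1 * Q.2.1 p.2)

/-- The dependence measure `K_α`. -/
noncomputable def Kalpha {X Y : Type*} [Fintype X] [Fintype Y] (α : ℝ) (P : X × Y → ℝ≥0∞) :
    EReal :=
  ⨅ (Q : PMFon X × PMFon Y), relAlphaEnt α P (fun p => Q.1.1 p.1 * Q.2.1 p.2)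

/-- Rényi entropy of order `β`. -/
noncomputable def renyiEnt {X : Type*} [Fintype X] (β : ℝ) (P : X → ℝ≥0∞) : EReal :=
  if β = 1 then (((∑ x, (P x).toReal * Real.log (P x).toReal⁻¹ : ℝ)) : EReal)
  else (((1 - β)⁻¹ : ℝ) : EReal) * ENNReal.log (∑ x, P x ^ β)

/-- Min-entropy. -/
noncomputable def minEnt {X : Type*} [Fintype X] (P : X → ℝ≥0∞) : EReal :=
  - ENNReal.log (⨆ x, P x)

/-!
For the diagonal law `P (x, y) = c · 1{x = y}` the Rényi sum against a product `q₁ ⊗ q₂` collapses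
to `c ^ α · ∑ₓ (q₁ x q₂ x) ^ (1 - α)`. When `α ≤ 1/2` the exponent `1 - α` is at least `1/2`, so
this sum is dominated by the Bhattacharyya coefficient `∑ₓ √(q₁ x q₂ x) ≤ 1` (Cauchy–Schwarz), with
equality at a point mass. Since `(α - 1)⁻¹ < 0`, the minimum over products is therefore
`(α - 1)⁻¹ log (c ^ α)`, which for `c = 1/n` is `(α/(1-α)) log n < log n`, the value at the
uniform product.
-/

section Bhattacharyya

variable {ι : Type*} [Fintype ι]

theorem le_one_of_sum_eq_one {p : ι → ℝ≥0∞} (hp : ∑ x, p x = 1) (x : ι) : p x ≤ 1 :=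
  hp ▸ single_le_sum (fun _ _ => zero_le) (mem_univ x)

theorem sum_mul_rpow_half_le_one {p q : ι → ℝ≥0∞} (hp : ∑ x, p x = 1) (hq : ∑ x, q x = 1) :
    ∑ x, (p x * q x) ^ (1 / 2 : ℝ) ≤ 1 := by
  have hsq : ∀ a : ℝ≥0∞, (a ^ (1 / 2 : ℝ)) ^ (2 : ℝ) = a := fun a => by
    rw [← ENNReal.rpow_mul]; norm_num
  calc ∑ x, (p x * q x) ^ (1 / 2 : ℝ)
      = ∑ x, p x ^ (1 / 2 : ℝ) * q x ^ (1 / 2 : ℝ) := by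
        simp only [ENNReal.mul_rpow_of_nonneg _ _ (by norm_num : (0 : ℝ) ≤ 1 / 2)]
    _ ≤ (∑ x, p x) ^ (1 / 2 : ℝ) * (∑ x, q x) ^ (1 / 2 : ℝ) := by
        simpa only [hsq] using ENNReal.inner_le_Lp_mul_Lq univ (fun x => p x ^ (1 / 2 : ℝ))
          (fun x => q x ^ (1 / 2 : ℝ)) Real.HolderConjugate.two_two
    _ = 1 := by rw [hp, hq, ENNReal.one_rpow, one_mul]

theorem sum_rpow_mul_le_one {p q : ι → ℝ≥0∞} (hp : ∑ x, p x = 1) (hq : ∑ x, q x = 1)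
    {β : ℝ} (hβ : 1 / 2 ≤ β) : ∑ x, (p x * q x) ^ β ≤ 1 :=
  (sum_le_sum fun x _ => ENNReal.rpow_le_rpow_of_exponent_ge
    (mul_le_one' (le_one_of_sum_eq_one hp x) (le_one_of_sum_eq_one hq x)) hβ).trans
    (sum_mul_rpow_half_le_one hp hq)

end Bhattacharyya

theorem EReal.antitone_coe_mul_log {r : ℝ} (hr : r ≤ 0) :
    Antitone fun t : ℝ≥0∞ => (r : EReal) * ENNReal.log t := fun _ _ hab => by
  simpa only [mul_comm (r : EReal)] using
    EReal.mul_le_mul_of_nonpos_right (ENNReal.log_monotone hab) (EReal.coe_nonpos.2 hr)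

theorem ENNReal.log_natCast {n : ℕ} (hn : n ≠ 0) : ENNReal.log n = Real.log n := by
  rw [ENNReal.log_pos_real (by exact_mod_cast hn) (ENNReal.natCast_ne_top n)]
  simp

theorem ENNReal.log_inv_natCast_rpow {n : ℕ} (hn : n ≠ 0) (s : ℝ) :
    ENNReal.log ((n : ℝ≥0∞)⁻¹ ^ s) = ((-(s * Real.log n) : ℝ) : EReal) := by
  rw [ENNReal.log_rpow, ENNReal.log_inv, ENNReal.log_natCast hn]
  norm_cast
  ring

def PMFon.dirac {ι : Type*} [Fintype ι] [DecidableEq ι] (x₀ : ι) : PMFon ι :=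
  ⟨fun x => if x = x₀ then 1 else 0, by simp⟩

section Diagonal

variable {ι : Type*} [Fintype ι] [DecidableEq ι] {α : ℝ}

theorem sum_diag_rpow_mul_rpow (hα : 0 < α) (c : ℝ≥0∞) (Q : ι × ι → ℝ≥0∞) :
    ∑ p : ι × ι, (if p.1 = p.2 then c else 0) ^ α * Q p ^ (1 - α) =
      c ^ α * ∑ x, Q (x, x) ^ (1 - α) := by
  rw [Fintype.sum_prod_type, mul_sum]
  refine sum_congr rfl fun x _ => ?_
  rw [sum_eq_single x (fun y _ hyx => by
    rw [if_neg (Ne.symm hyx), ENNReal.zero_rpow_of_pos hα, zero_mul]) (by simp), if_pos rfl]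

theorem renyiDiv_diag (hα0 : 0 < α) (hα1 : α ≠ 1) (c : ℝ≥0∞) (Q : ι × ι → ℝ≥0∞) :
    renyiDiv α (fun p : ι × ι => if p.1 = p.2 then c else 0) Q =
      ((α - 1)⁻¹ : ℝ) * ENNReal.log (c ^ α * ∑ x, Q (x, x) ^ (1 - α)) := by
  rw [renyiDiv, if_neg hα1, sum_diag_rpow_mul_rpow hα0]

theorem le_renyiDiv_diag_prod (hα0 : 0 < α) (hα : α ≤ 1 / 2) (c : ℝ≥0∞)
    (Q : PMFon ι × PMFon ι) :
    ((α - 1)⁻¹ : ℝ) * ENNReal.log (c ^ α) ≤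
      renyiDiv α (fun p : ι × ι => if p.1 = p.2 then c else 0)
        (fun p => Q.1.1 p.1 * Q.2.1 p.2) := by
  rw [renyiDiv_diag hα0 (by linarith)]
  refine EReal.antitone_coe_mul_log (by simp only [inv_nonpos]; linarith) ?_
  exact mul_le_of_le_one_right' (sum_rpow_mul_le_one Q.1.2 Q.2.2 (by linarith))

theorem renyiDiv_diag_dirac (hα0 : 0 < α) (hα1 : α < 1) (c : ℝ≥0∞) (x₀ : ι) :
    renyiDiv α (fun p : ι × ι => if p.1 = p.2 then c else 0)
        (fun p => (PMFon.dirac x₀).1 p.1 * (PMFon.dirac x₀).1 p.2) =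
      ((α - 1)⁻¹ : ℝ) * ENNReal.log (c ^ α) := by
  have hsum : ∑ x, ((PMFon.dirac x₀).1 x * (PMFon.dirac x₀).1 x) ^ (1 - α) = 1 := by
    rw [sum_eq_single x₀ (fun x _ hx => by
      simp [PMFon.dirac, hx, ENNReal.zero_rpow_of_pos (sub_pos.2 hα1)]) (by simp)]
    simp [PMFon.dirac]
  rw [renyiDiv_diag hα0 hα1.ne, hsum, mul_one]

theorem Jalpha_diag [Nonempty ι] (hα0 : 0 < α) (hα : α ≤ 1 / 2) (c : ℝ≥0∞) :
    Jalpha α (fun p : ι × ι => if p.1 = p.2 then c else 0) =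
      ((α - 1)⁻¹ : ℝ) * ENNReal.log (c ^ α) := by
  obtain ⟨x₀⟩ := ‹Nonempty ι›
  refine le_antisymm ?_ (le_iInf (le_renyiDiv_diag_prod hα0 hα c))
  exact (iInf_le _ (PMFon.dirac x₀, PMFon.dirac x₀)).trans_eq
    (renyiDiv_diag_dirac hα0 (by linarith) c x₀)

end Diagonal

theorem renyiDiv_diag_uniform {n : ℕ} (hn : n ≠ 0) {α : ℝ} (hα0 : 0 < α) (hα1 : α ≠ 1) :
    renyiDiv α (fun p : Fin n × Fin n => if p.1 = p.2 then ((n : ℝ≥0∞))⁻¹ else 0)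
        (fun _ : Fin n × Fin n => ((n : ℝ≥0∞))⁻¹ * ((n : ℝ≥0∞))⁻¹) =
      ((Real.log n : ℝ) : EReal) := by
  rw [renyiDiv_diag hα0 hα1, sum_const, card_univ, Fintype.card_fin, nsmul_eq_mul,
    ENNReal.log_mul_add, ENNReal.log_inv_natCast_rpow hn, ENNReal.log_mul_add,
    ENNReal.log_natCast hn, ENNReal.log_rpow, ENNReal.log_mul_add, ENNReal.log_inv,
    ENNReal.log_natCast hn]
  norm_cast
  have : α - 1 ≠ 0 := sub_ne_zero.2 hα1
  field_simp
  ring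

/-- for `α ∈ (0, 1/2)`, convexity fails: for the uniform diagonal
distribution on `Fin n × Fin n` (`n ≥ 2`), the uniform product gives value `log n`,
while `J_α = (α/(1-α)) log n < log n`. -/
theorem stmt16 (n : ℕ) (hn : 2 ≤ n) (α : ℝ) (hα0 : 0 < α) (hα : α < 1/2) :
    renyiDiv α (fun p : Fin n × Fin n => if p.1 = p.2 then ((n : ℝ≥0∞))⁻¹ else 0)
        (fun _ : Fin n × Fin n => ((n : ℝ≥0∞))⁻¹ * ((n : ℝ≥0∞))⁻¹) =
      ((Real.log n : ℝ) : EReal) ∧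
    Jalpha α (fun p : Fin n × Fin n => if p.1 = p.2 then ((n : ℝ≥0∞))⁻¹ else 0) =
      ((α / (1 - α) * Real.log n : ℝ) : EReal) ∧
    ((α / (1 - α) * Real.log n : ℝ) : EReal) < ((Real.log n : ℝ) : EReal) := by
  have hn0 : n ≠ 0 := by omega
  have : Nonempty (Fin n) := ⟨⟨0, by omega⟩⟩
  refine ⟨renyiDiv_diag_uniform hn0 hα0 (by linarith), ?_, ?_⟩
  · rw [Jalpha_diag hα0 hα.le, ENNReal.log_inv_natCast_rpow hn0, ← EReal.coe_mul]
    have : α - 1 ≠ 0 := by linarith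
    have : 1 - α ≠ 0 := by linarith
    congr 1
    field_simp
    ring
  · have hlog : 0 < Real.log n := Real.log_pos (by exact_mod_cast hn)
    have hratio : α / (1 - α) < 1 := (div_lt_one (by linarith)).2 (by linarith)
    exact_mod_cast (mul_lt_iff_lt_one_left hlog).2 hratio
end

section
/- For a finite random variable X (joint PMF P_XY(x,y) = P_X(x)1{x=y}), K_α(X;X) = 2 H_{α/(2−α)}(X) − H_α(X) for α ∈ (0,2), and K_α(X;X) = (α/(α−1)) H_∞(X) − H_α(X) for α ≥ 2. -/
open scoped ENNReal BigOperators
open Finset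

/-!
For the diagonal joint of `P` and a product `Q₁ ⊗ Q₂` the relative `α`-entropy is
`α/(1-α) log ∑ P (Q₁Q₂)^(α-1) + log ∑ Q₁^α + log ∑ Q₂^α - 1/(1-α) log ∑ P^α`, and by Cauchy–Schwarz
`2 log ∑ (Q₁Q₂)^(α/2) ≤ log ∑ Q₁^α + log ∑ Q₂^α`; so it is bounded below by an expression in the
single function `r = Q₁Q₂`. For `α < 2`, Hölder's inequality compares `∑ P r^(α-1)`, `∑ r^(α/2)`
and `∑ P^(α/(2-α))` (in opposite directions on the two sides of `α = 1`), with equality for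
`Q₁ = Q₂ ∝ P^(1/(2-α))`. For `α ≥ 2` one bounds `P ≤ max P` and uses `∑ f^s ≤ (∑ f)^s` for
`f = r^(α/2)`, `s = 2(α-1)/α ≥ 1`, with equality at the point mass on a mode of `P`. At `α = 1` the
claim is `I(X;X) = H(X)`, which is two instances of Gibbs' inequality.
-/
open Real

section RealInequalities

variable {X : Type*} [Fintype X]

theorem sum_rpow_le_rpow_sum {s : ℝ} (hs : 1 ≤ s) (f : X → ℝ) (hf : ∀ x, 0 ≤ f x) :
    ∑ x, f x ^ s ≤ (∑ x, f x) ^ s := by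
  have hsum : 0 ≤ ∑ x, f x := sum_nonneg fun x _ => hf x
  calc ∑ x, f x ^ s = ∑ x, f x * f x ^ (s - 1) := by
        refine sum_congr rfl fun x _ => ?_
        rw [mul_comm, ← rpow_add_one' (hf x) (by linarith), sub_add_cancel]
    _ ≤ ∑ x, f x * (∑ y, f y) ^ (s - 1) :=
        sum_le_sum fun x _ => mul_le_mul_of_nonneg_left (rpow_le_rpow (hf x)
          (single_le_sum (fun y _ => hf y) (mem_univ x)) (by linarith)) (hf x)
    _ = (∑ x, f x) ^ s := by
        rw [← sum_mul, mul_comm, ← rpow_add_one' hsum (by linarith), sub_add_cancel]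

theorem sum_rpow_mul_rpow_le {a : ℝ} (ha₀ : 0 < a) (ha₁ : a < 1) (u v : X → ℝ)
    (hu : ∀ x, 0 ≤ u x) (hv : ∀ x, 0 ≤ v x) :
    ∑ x, u x ^ a * v x ^ (1 - a) ≤ (∑ x, u x) ^ a * (∑ x, v x) ^ (1 - a) := by
  have h := inner_le_Lp_mul_Lq_of_nonneg univ (HolderConjugate.inv_one_sub_inv ha₀ ha₁)
    (f := fun x => u x ^ a) (g := fun x => v x ^ (1 - a))
    (fun x _ => rpow_nonneg (hu x) _) (fun x _ => rpow_nonneg (hv x) _)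
  simpa only [rpow_rpow_inv (hu _) ha₀.ne', rpow_rpow_inv (hv _) (sub_pos.2 ha₁).ne',
    one_div, inv_inv] using h

theorem sum_mul_log_div_nonneg (p q : X → ℝ) (hp : ∀ x, 0 ≤ p x) (hq : ∀ x, 0 ≤ q x)
    (hqp : ∑ x, q x ≤ ∑ x, p x) (hpq : ∀ x, q x = 0 → p x = 0) :
    0 ≤ ∑ x, p x * log (p x / q x) := by
  have key : ∀ x, p x - q x ≤ p x * log (p x / q x) := by
    intro x
    rcases (hq x).eq_or_lt with hqx | hqx
    · simp [hpq x hqx.symm, ← hqx]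
    · have h := mul_le_mul_of_nonneg_left
        (self_sub_one_le_mul_log (div_nonneg (hp x) hqx.le)) hqx.le
      rwa [mul_sub, mul_one, mul_div_cancel₀ _ hqx.ne', ← mul_assoc,
        mul_div_cancel₀ _ hqx.ne'] at h
  calc (0 : ℝ) ≤ ∑ x, (p x - q x) := by rw [sum_sub_distrib]; linarith
    _ ≤ _ := sum_le_sum fun x _ => key x

theorem sum_mul_log_div_mul (p q₁ q₂ : X → ℝ) (hpq : ∀ x, q₁ x * q₂ x = 0 → p x = 0) :
    ∑ x, p x * log (p x / (q₁ x * q₂ x))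
      = ∑ x, p x * log (p x)⁻¹ + ∑ x, p x * log (p x / q₁ x)
        + ∑ x, p x * log (p x / q₂ x) := by
  rw [← sum_add_distrib, ← sum_add_distrib]
  refine sum_congr rfl fun x _ => ?_
  rcases eq_or_ne (p x) 0 with hpx | hpx
  · simp [hpx]
  obtain ⟨hq₁, hq₂⟩ := mul_ne_zero_iff.1 (mt (hpq x) hpx)
  rw [log_div hpx (mul_ne_zero hq₁ hq₂), log_mul hq₁ hq₂, log_div hpx hq₁, log_div hpx hq₂,
    log_inv]
  ring

theorem sum_rpow_pos {f : X → ℝ} (hf : ∀ x, 0 ≤ f x) {x₀ : X} (hx₀ : 0 < f x₀) (γ : ℝ) :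
    0 < ∑ x, f x ^ γ :=
  sum_pos' (fun x _ => rpow_nonneg (hf x) γ) ⟨x₀, mem_univ _, rpow_pos_of_pos hx₀ γ⟩

theorem exists_pos_of_sum_mul_rpow_pos {p r : X → ℝ} {γ : ℝ} (hγ : γ ≠ 0)
    (hp : ∀ x, 0 ≤ p x) (hr : ∀ x, 0 ≤ r x) (hT : 0 < ∑ x, p x * r x ^ γ) :
    ∃ x, 0 < p x ∧ 0 < r x := by
  obtain ⟨x, -, hx⟩ := exists_lt_of_sum_lt (f := fun _ => (0 : ℝ)) (by simpa using hT)
  refine ⟨x, (hp x).lt_of_ne fun h => ?_, (hr x).lt_of_ne fun h => ?_⟩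
  · simp [← h] at hx
  · simp [← h, zero_rpow hγ] at hx

theorem two_mul_log_sum_rpow_half_le {α : ℝ} (q₁ q₂ : X → ℝ) (hq₁ : ∀ x, 0 ≤ q₁ x)
    (hq₂ : ∀ x, 0 ≤ q₂ x) (hG : 0 < ∑ x, (q₁ x * q₂ x) ^ (α / 2)) :
    2 * log (∑ x, (q₁ x * q₂ x) ^ (α / 2)) ≤ log (∑ x, q₁ x ^ α) + log (∑ x, q₂ x ^ α) := by
  have hsqrt : ∀ q : X → ℝ, (∀ x, 0 ≤ q x) → ∀ x, q x ^ (α / 2) = √(q x ^ α) := fun q hq x => by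
    rw [sqrt_eq_rpow, ← rpow_mul (hq x)]; ring_nf
  have hCS : ∑ x, (q₁ x * q₂ x) ^ (α / 2) ≤ √(∑ x, q₁ x ^ α) * √(∑ x, q₂ x ^ α) := by
    simp only [mul_rpow (hq₁ _) (hq₂ _), hsqrt q₁ hq₁, hsqrt q₂ hq₂]
    exact sum_sqrt_mul_sqrt_le univ (fun x => rpow_nonneg (hq₁ x) α)
      (fun x => rpow_nonneg (hq₂ x) α)
  obtain ⟨h₁, h₂⟩ := mul_ne_zero_iff.1 (hG.trans_le hCS).ne'
  have := log_le_log hG hCS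
  rw [log_mul h₁ h₂, log_sqrt (sum_nonneg fun x _ => rpow_nonneg (hq₁ x) α),
    log_sqrt (sum_nonneg fun x _ => rpow_nonneg (hq₂ x) α)] at this
  linarith

end RealInequalities

section LowerBounds

variable {X : Type*} [Fintype X]

/- For `α < 1` the real power `0 ^ (α - 1)` is the junk value `0`, not `∞`;
`hguard` rules it out. -/
theorem mul_log_sum_rpow_le_of_lt_one {α : ℝ} (hα₀ : 0 < α) (hα₁ : α < 1) (p r : X → ℝ)
    (hp : ∀ x, 0 ≤ p x) (hr : ∀ x, 0 ≤ r x) (hguard : ∀ x, r x = 0 → p x = 0)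
    (hT : 0 < ∑ x, p x * r x ^ (α - 1)) :
    (2 - α) / (1 - α) * log (∑ x, p x ^ (α / (2 - α)))
      ≤ α / (1 - α) * log (∑ x, p x * r x ^ (α - 1)) + 2 * log (∑ x, r x ^ (α / 2)) := by
  obtain ⟨x₀, hpx₀, hrx₀⟩ := exists_pos_of_sum_mul_rpow_pos (by linarith) hp hr hT
  have hG := sum_rpow_pos hr hrx₀ (α / 2)
  have h2α : 0 < 2 - α := by linarith
  have h1α : 0 < 1 - α := by linarith
  set a := α / (2 - α) with ha
  have hS := sum_rpow_pos hp hpx₀ a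
  have ha₀ : 0 < a := div_pos hα₀ h2α
  have ha₁ : a < 1 := by rw [ha, div_lt_one h2α]; linarith
  -- Hölder with weights `a, 1 - a` after factoring
  -- `p ^ a = (p r ^ (α - 1)) ^ a * (r ^ (α / 2)) ^ (1 - a)`
  have hsplit : ∀ x, (p x * r x ^ (α - 1)) ^ a * (r x ^ (α / 2)) ^ (1 - a) = p x ^ a := by
    intro x
    rcases (hr x).eq_or_lt with hrx | hrx
    · simp [hguard x hrx.symm, ← hrx, zero_rpow ha₀.ne']
    rw [mul_rpow (hp x) (rpow_nonneg (hr x) _), ← rpow_mul (hr x), ← rpow_mul (hr x),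
      mul_assoc, ← rpow_add hrx, ha]
    convert mul_one _ using 2
    convert rpow_zero (r x) using 2
    field_simp
    ring
  have hH := sum_rpow_mul_rpow_le ha₀ ha₁ (fun x => p x * r x ^ (α - 1)) (fun x => r x ^ (α / 2))
    (fun x => mul_nonneg (hp x) (rpow_nonneg (hr x) _)) (fun x => rpow_nonneg (hr x) _)
  simp only [hsplit] at hH
  have hlog := log_le_log hS hH
  rw [log_mul (rpow_pos_of_pos hT _).ne' (rpow_pos_of_pos hG _).ne', log_rpow hT,
    log_rpow hG] at hlog
  calc (2 - α) / (1 - α) * log (∑ x, p x ^ a)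
      ≤ (2 - α) / (1 - α) * (a * log (∑ x, p x * r x ^ (α - 1))
        + (1 - a) * log (∑ x, r x ^ (α / 2))) :=
        mul_le_mul_of_nonneg_left hlog (div_pos h2α h1α).le
    _ = _ := by rw [ha]; field_simp; ring

theorem mul_log_sum_rpow_le_of_one_lt_of_lt_two {α : ℝ} (hα₁ : 1 < α) (hα₂ : α < 2)
    (p r : X → ℝ) (hp : ∀ x, 0 ≤ p x) (hr : ∀ x, 0 ≤ r x) (hT : 0 < ∑ x, p x * r x ^ (α - 1)) :
    (2 - α) / (1 - α) * log (∑ x, p x ^ (α / (2 - α)))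
      ≤ α / (1 - α) * log (∑ x, p x * r x ^ (α - 1)) + 2 * log (∑ x, r x ^ (α / 2)) := by
  obtain ⟨x₀, hpx₀, hrx₀⟩ := exists_pos_of_sum_mul_rpow_pos (by linarith) hp hr hT
  have hS := sum_rpow_pos hp hpx₀ (α / (2 - α))
  have hG := sum_rpow_pos hr hrx₀ (α / 2)
  have hα₀ : 0 < α := by linarith
  have h2α : 0 < 2 - α := by linarith
  have h1α : 1 - α < 0 := by linarith
  have h1α' : 1 - α ≠ 0 := h1α.ne
  set a := (2 - α) / α with ha
  have ha₀ : 0 < a := div_pos h2α hα₀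
  have ha₁ : a < 1 := by rw [ha, div_lt_one hα₀]; linarith
  -- Hölder with weights `a, 1 - a` after factoring
  -- `p r ^ (α - 1) = (p ^ (α / (2 - α))) ^ a * (r ^ (α / 2)) ^ (1 - a)`
  have hsplit : ∀ x, (p x ^ (α / (2 - α))) ^ a * (r x ^ (α / 2)) ^ (1 - a)
      = p x * r x ^ (α - 1) := by
    intro x
    rw [← rpow_mul (hp x), ← rpow_mul (hr x), ha]
    congr 1
    · convert rpow_one (p x) using 2
      field_simp
    · congr 1
      field_simp
      ring
  have hH := sum_rpow_mul_rpow_le ha₀ ha₁ (fun x => p x ^ (α / (2 - α)))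
    (fun x => r x ^ (α / 2)) (fun x => rpow_nonneg (hp x) _) (fun x => rpow_nonneg (hr x) _)
  simp only [hsplit] at hH
  have hlog := log_le_log hT hH
  rw [log_mul (rpow_pos_of_pos hS _).ne' (rpow_pos_of_pos hG _).ne', log_rpow hS,
    log_rpow hG] at hlog
  calc (2 - α) / (1 - α) * log (∑ x, p x ^ (α / (2 - α)))
      = α / (1 - α) * (a * log (∑ x, p x ^ (α / (2 - α)))
        + (1 - a) * log (∑ x, r x ^ (α / 2))) + 2 * log (∑ x, r x ^ (α / 2)) := by
        rw [ha]; field_simp; ring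
    _ ≤ _ := by
        gcongr ?_ + _
        exact mul_le_mul_of_nonpos_left hlog (div_neg_of_pos_of_neg hα₀ h1α).le

theorem mul_log_le_of_two_le {α : ℝ} (hα : 2 ≤ α) (p r : X → ℝ) {m : ℝ} (hm : ∀ x, p x ≤ m)
    (hp : ∀ x, 0 ≤ p x) (hr : ∀ x, 0 ≤ r x) (hT : 0 < ∑ x, p x * r x ^ (α - 1)) :
    α / (1 - α) * log m
      ≤ α / (1 - α) * log (∑ x, p x * r x ^ (α - 1)) + 2 * log (∑ x, r x ^ (α / 2)) := by
  have hα₀ : 0 < α := by linarith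
  obtain ⟨x₀, hpx₀, hrx₀⟩ := exists_pos_of_sum_mul_rpow_pos (by linarith) hp hr hT
  have h1α : 1 - α ≠ 0 := by linarith
  have hm₀ : 0 < m := hpx₀.trans_le (hm x₀)
  have hG := sum_rpow_pos hr hrx₀ (α / 2)
  set s := 2 * (α - 1) / α with hs
  have hs₁ : 1 ≤ s := by rw [hs, le_div_iff₀ hα₀]; linarith
  have hpow : ∀ x, r x ^ (α - 1) = (r x ^ (α / 2)) ^ s := fun x => by
    rw [← rpow_mul (hr x), hs]; congr 1; field_simp
  have hH : ∑ x, p x * r x ^ (α - 1) ≤ m * (∑ x, r x ^ (α / 2)) ^ s :=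
    calc ∑ x, p x * r x ^ (α - 1) ≤ ∑ x, m * (r x ^ (α / 2)) ^ s :=
          sum_le_sum fun x _ => by
            rw [← hpow]; exact mul_le_mul_of_nonneg_right (hm x) (rpow_nonneg (hr x) _)
      _ ≤ m * (∑ x, r x ^ (α / 2)) ^ s := by
          rw [← mul_sum]
          exact mul_le_mul_of_nonneg_left
            (sum_rpow_le_rpow_sum hs₁ _ fun x => rpow_nonneg (hr x) _) hm₀.le
  have hlog := log_le_log hT hH
  rw [log_mul hm₀.ne' (rpow_pos_of_pos hG _).ne', log_rpow hG] at hlog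
  have hc : α / (1 - α) < 0 := div_neg_of_pos_of_neg hα₀ (by linarith)
  calc α / (1 - α) * log m
      = α / (1 - α) * (log m + s * log (∑ x, r x ^ (α / 2)))
        + 2 * log (∑ x, r x ^ (α / 2)) := by rw [hs]; field_simp; ring
    _ ≤ _ := by gcongr ?_ + _; exact mul_le_mul_of_nonpos_left hlog hc.le

end LowerBounds

section DiagRelAlphaEnt

variable {X : Type*} [Fintype X]

/-- Real form of `relAlphaEnt α` between the diagonal joint of `p` and the product `q₁ ⊗ q₂`. -/
noncomputable def diagRelAlphaEnt (α : ℝ) (p q₁ q₂ : X → ℝ) : ℝ :=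
  α / (1 - α) * log (∑ x, p x * (q₁ x * q₂ x) ^ (α - 1))
    + (log (∑ x, q₁ x ^ α) + log (∑ x, q₂ x ^ α)) - (1 - α)⁻¹ * log (∑ x, p x ^ α)

variable {α : ℝ} (p q₁ q₂ : X → ℝ)

theorem le_diagRelAlphaEnt_of_lt_two (hp : ∀ x, 0 ≤ p x) (hq₁ : ∀ x, 0 ≤ q₁ x)
    (hq₂ : ∀ x, 0 ≤ q₂ x) (hα₀ : 0 < α) (hα₁ : α ≠ 1) (hα₂ : α < 2)
    (hguard : α < 1 → ∀ x, q₁ x * q₂ x = 0 → p x = 0)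
    (hT : 0 < ∑ x, p x * (q₁ x * q₂ x) ^ (α - 1)) :
    (2 - α) / (1 - α) * log (∑ x, p x ^ (α / (2 - α))) - (1 - α)⁻¹ * log (∑ x, p x ^ α)
      ≤ diagRelAlphaEnt α p q₁ q₂ := by
  have hr : ∀ x, 0 ≤ q₁ x * q₂ x := fun x => mul_nonneg (hq₁ x) (hq₂ x)
  obtain ⟨x₀, -, hrx₀⟩ := exists_pos_of_sum_mul_rpow_pos (sub_ne_zero.2 hα₁) hp hr hT
  have hCS := two_mul_log_sum_rpow_half_le q₁ q₂ hq₁ hq₂ (sum_rpow_pos hr hrx₀ (α / 2))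
  have hH := (lt_or_gt_of_ne hα₁).elim
    (fun hlt => mul_log_sum_rpow_le_of_lt_one hα₀ hlt p _ hp hr (hguard hlt) hT)
    (fun hgt => mul_log_sum_rpow_le_of_one_lt_of_lt_two hgt hα₂ p _ hp hr hT)
  rw [diagRelAlphaEnt]
  linarith

theorem le_diagRelAlphaEnt_of_two_le (hp : ∀ x, 0 ≤ p x) (hq₁ : ∀ x, 0 ≤ q₁ x)
    (hq₂ : ∀ x, 0 ≤ q₂ x) (hα : 2 ≤ α) {m : ℝ} (hm : ∀ x, p x ≤ m)
    (hT : 0 < ∑ x, p x * (q₁ x * q₂ x) ^ (α - 1)) :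
    α / (1 - α) * log m - (1 - α)⁻¹ * log (∑ x, p x ^ α) ≤ diagRelAlphaEnt α p q₁ q₂ := by
  have hr : ∀ x, 0 ≤ q₁ x * q₂ x := fun x => mul_nonneg (hq₁ x) (hq₂ x)
  obtain ⟨x₀, -, hrx₀⟩ := exists_pos_of_sum_mul_rpow_pos (by linarith) hp hr hT
  have hCS := two_mul_log_sum_rpow_half_le q₁ q₂ hq₁ hq₂ (sum_rpow_pos hr hrx₀ (α / 2))
  have hH := mul_log_le_of_two_le hα p _ hm hp hr hT
  rw [diagRelAlphaEnt]
  linarith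

end DiagRelAlphaEnt

section Optimizers

variable {X : Type*} [Fintype X] {α : ℝ}

theorem diagRelAlphaEnt_const_mul (hα₁ : α ≠ 1) (p q : X → ℝ) (hq : ∀ x, 0 ≤ q x) {c : ℝ}
    (hc : 0 < c) (hT : ∑ x, p x * (q x * q x) ^ (α - 1) ≠ 0) (hB : ∑ x, q x ^ α ≠ 0) :
    diagRelAlphaEnt α p (fun x => c * q x) (fun x => c * q x) = diagRelAlphaEnt α p q q := by
  have eT : ∑ x, p x * (c * q x * (c * q x)) ^ (α - 1)
      = (c * c) ^ (α - 1) * ∑ x, p x * (q x * q x) ^ (α - 1) := by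
    rw [mul_sum]
    refine sum_congr rfl fun x _ => ?_
    rw [mul_mul_mul_comm, mul_rpow (mul_self_nonneg c) (mul_self_nonneg (q x))]
    ring
  have eB : ∑ x, (c * q x) ^ α = c ^ α * ∑ x, q x ^ α := by
    rw [mul_sum]
    exact sum_congr rfl fun x _ => mul_rpow hc.le (hq x)
  have h1α : 1 - α ≠ 0 := sub_ne_zero.2 hα₁.symm
  simp only [diagRelAlphaEnt, eT, eB]
  rw [log_mul (rpow_pos_of_pos (mul_pos hc hc) _).ne' hT, log_mul (rpow_pos_of_pos hc _).ne' hB,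
    log_rpow (mul_pos hc hc), log_rpow hc, log_mul hc.ne' hc.ne']
  field_simp
  ring

theorem diagRelAlphaEnt_rpow_inv_two_sub (hα₀ : 0 < α) (hα₁ : α ≠ 1) (hα₂ : α < 2) (p : X → ℝ)
    (hp : ∀ x, 0 ≤ p x) :
    diagRelAlphaEnt α p (fun x => p x ^ (2 - α)⁻¹) (fun x => p x ^ (2 - α)⁻¹)
      = (2 - α) / (1 - α) * log (∑ x, p x ^ (α / (2 - α))) - (1 - α)⁻¹ * log (∑ x, p x ^ α) := by
  have h2α : 0 < 2 - α := by linarith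
  have h1α : 1 - α ≠ 0 := sub_ne_zero.2 hα₁.symm
  have hβ : 0 < α / (2 - α) := div_pos hα₀ h2α
  have hexp : 1 + ((2 - α)⁻¹ + (2 - α)⁻¹) * (α - 1) = α / (2 - α) := by field_simp; ring
  have eT : ∀ x, p x * (p x ^ (2 - α)⁻¹ * p x ^ (2 - α)⁻¹) ^ (α - 1) = p x ^ (α / (2 - α)) := by
    intro x
    rcases (hp x).eq_or_lt with hpx | hpx
    · simp [← hpx, zero_rpow hβ.ne']
    rw [← rpow_add hpx, ← rpow_mul hpx.le, ← rpow_one_add' hpx.le (hexp ▸ hβ.ne'), hexp]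
  have eB : ∀ x, (p x ^ (2 - α)⁻¹) ^ α = p x ^ (α / (2 - α)) := fun x => by
    rw [← rpow_mul (hp x)]; congr 1; field_simp
  simp only [diagRelAlphaEnt, eT, eB]
  field_simp
  ring

end Optimizers

section FiniteSums

variable {X : Type*} [Fintype X] {α : ℝ} {P Q₁ Q₂ : X → ℝ≥0∞}

theorem ne_top_of_sum_eq_one (hP : ∑ x, P x = 1) (x : X) : P x ≠ ⊤ :=
  (ENNReal.lt_top_of_sum_ne_top (hP ▸ ENNReal.one_ne_top) (mem_univ x)).ne

theorem toReal_sum_rpow (hP : ∑ x, P x = 1) {γ : ℝ} (hγ : 0 ≤ γ) :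
    (∑ x, P x ^ γ).toReal = ∑ x, (P x).toReal ^ γ := by
  rw [ENNReal.toReal_sum fun x _ => ENNReal.rpow_ne_top_of_nonneg hγ (ne_top_of_sum_eq_one hP x)]
  simp only [ENNReal.toReal_rpow]

theorem sum_toReal_eq_one (hP : ∑ x, P x = 1) : ∑ x, (P x).toReal = 1 := by
  rw [← ENNReal.toReal_sum fun x _ => ne_top_of_sum_eq_one hP x, hP, ENNReal.toReal_one]

theorem exists_toReal_pos_of_sum_eq_one (hP : ∑ x, P x = 1) : ∃ x, 0 < (P x).toReal := by
  obtain ⟨x, -, hx⟩ := exists_lt_of_sum_lt (s := univ) (f := fun _ => (0 : ℝ))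
    (g := fun x => (P x).toReal) (by simp [sum_toReal_eq_one hP])
  exact ⟨x, hx⟩

theorem sum_toReal_rpow_pos (hP : ∑ x, P x = 1) (γ : ℝ) : 0 < ∑ x, (P x).toReal ^ γ :=
  have ⟨_, hx₀⟩ := exists_toReal_pos_of_sum_eq_one hP
  sum_rpow_pos (fun _ => ENNReal.toReal_nonneg) hx₀ γ

theorem log_sum_rpow_eq_coe (hP : ∑ x, P x = 1) {γ : ℝ} (hγ : 0 < γ) :
    ENNReal.log (∑ x, P x ^ γ) = (log (∑ x, (P x).toReal ^ γ) : EReal) := by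
  rw [ENNReal.log_pos_real' (toReal_sum_rpow hP hγ.le ▸ sum_toReal_rpow_pos hP γ),
    toReal_sum_rpow hP hγ.le]

theorem toReal_sum_mul_rpow {γ : ℝ} (h : ∑ x, P x * (Q₁ x * Q₂ x) ^ γ ≠ ⊤) :
    (∑ x, P x * (Q₁ x * Q₂ x) ^ γ).toReal
      = ∑ x, (P x).toReal * ((Q₁ x).toReal * (Q₂ x).toReal) ^ γ := by
  rw [ENNReal.toReal_sum fun x _ => (ENNReal.lt_top_of_sum_ne_top h (mem_univ x)).ne]
  simp only [ENNReal.toReal_mul, ← ENNReal.toReal_rpow]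

theorem mul_rpow_ne_top {a b : ℝ≥0∞} {γ : ℝ} (ha : a ≠ ⊤) (hb : b ≠ ⊤)
    (h : γ < 0 → b = 0 → a = 0) : a * b ^ γ ≠ ⊤ := by
  rcases eq_or_ne a 0 with rfl | ha₀
  · simp
  refine ENNReal.mul_ne_top ha ?_
  rw [Ne, ENNReal.rpow_eq_top_iff]
  rintro (⟨hb₀, hγ⟩ | ⟨hb', -⟩)
  exacts [ha₀ (h hγ hb₀), hb hb']

theorem toReal_eq_zero_of_mul_toReal_eq_zero (hQ₁ : ∑ x, Q₁ x = 1) (hQ₂ : ∑ x, Q₂ x = 1)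
    (h : ∀ x, Q₁ x * Q₂ x = 0 → P x = 0) (x : X) :
    (Q₁ x).toReal * (Q₂ x).toReal = 0 → (P x).toReal = 0 := by
  rw [← ENNReal.toReal_mul, ENNReal.toReal_eq_zero_iff,
    or_iff_left (ENNReal.mul_ne_top (ne_top_of_sum_eq_one hQ₁ x) (ne_top_of_sum_eq_one hQ₂ x))]
  intro hx
  rw [h x hx, ENNReal.toReal_zero]

theorem toReal_sum_mul_rpow_pos (hP : ∑ x, P x = 1) (hQ₁ : ∑ x, Q₁ x = 1)
    (hQ₂ : ∑ x, Q₂ x = 1) (hguard : ∀ x, Q₁ x * Q₂ x = 0 → P x = 0) (γ : ℝ) :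
    0 < ∑ x, (P x).toReal * ((Q₁ x).toReal * (Q₂ x).toReal) ^ γ := by
  obtain ⟨x₀, hx₀⟩ := exists_toReal_pos_of_sum_eq_one hP
  have hQx₀ : 0 < (Q₁ x₀).toReal * (Q₂ x₀).toReal :=
    (by positivity : (0 : ℝ) ≤ _).lt_of_ne fun h =>
      hx₀.ne' (toReal_eq_zero_of_mul_toReal_eq_zero hQ₁ hQ₂ hguard x₀ h.symm)
  exact sum_pos' (fun x _ => by positivity)
    ⟨x₀, mem_univ _, mul_pos hx₀ (rpow_pos_of_pos hQx₀ _)⟩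

theorem sum_mul_rpow_eq_top {γ : ℝ} (hγ : γ < 0) {x : X} (hx : Q₁ x * Q₂ x = 0)
    (hPx : P x ≠ 0) : ∑ y, P y * (Q₁ y * Q₂ y) ^ γ = ⊤ :=
  ENNReal.sum_eq_top.2
    ⟨x, mem_univ x, by rw [hx, ENNReal.zero_rpow_of_neg hγ, ENNReal.mul_top hPx]⟩

theorem sum_prod_eq_sum_diag {M : Type*} [AddCommMonoid M] {f : X × X → M}
    (hf : ∀ z : X × X, z.1 ≠ z.2 → f z = 0) : ∑ z, f z = ∑ x, f (x, x) := by
  rw [Fintype.sum_prod_type]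
  exact sum_congr rfl fun x _ =>
    sum_eq_single x (fun y _ hy => hf (x, y) (Ne.symm hy)) (absurd (mem_univ x))

noncomputable def escort (γ : ℝ) (P : X → ℝ≥0∞) : X → ℝ≥0∞ :=
  fun x => (∑ y, P y ^ γ)⁻¹ * P x ^ γ

theorem sum_escort (hP : ∑ x, P x = 1) {γ : ℝ} (hγ : 0 < γ) : ∑ x, escort γ P x = 1 := by
  have hZ := toReal_sum_rpow hP hγ.le ▸ sum_toReal_rpow_pos hP γ
  rw [ENNReal.toReal_pos_iff] at hZ
  simp only [escort]
  rw [← mul_sum, ENNReal.inv_mul_cancel hZ.1.ne' hZ.2.ne]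

end FiniteSums

section DiagonalJoint

variable {X : Type*} [Fintype X] [DecidableEq X] {α : ℝ} {P Q₁ Q₂ : X → ℝ≥0∞}

def diagJoint (P : X → ℝ≥0∞) : X × X → ℝ≥0∞ := fun z => if z.1 = z.2 then P z.1 else 0

theorem relAlphaEnt_diagJoint_prod (hα₀ : 0 < α) (hα₁ : α ≠ 1) (P Q₁ Q₂ : X → ℝ≥0∞) :
    relAlphaEnt α (diagJoint P) (fun z => Q₁ z.1 * Q₂ z.2)
      = ((α / (1 - α) : ℝ) : EReal) * ENNReal.log (∑ x, P x * (Q₁ x * Q₂ x) ^ (α - 1))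
        + (ENNReal.log (∑ x, Q₁ x ^ α) + ENNReal.log (∑ x, Q₂ x ^ α))
        - (((1 - α)⁻¹ : ℝ) : EReal) * ENNReal.log (∑ x, P x ^ α) := by
  have eT : ∑ z, diagJoint P z * (Q₁ z.1 * Q₂ z.2) ^ (α - 1)
      = ∑ x, P x * (Q₁ x * Q₂ x) ^ (α - 1) := by
    rw [sum_prod_eq_sum_diag fun z hz => by simp [diagJoint, hz]]
    simp [diagJoint]
  have eB : ∑ z : X × X, (Q₁ z.1 * Q₂ z.2) ^ α = (∑ x, Q₁ x ^ α) * ∑ x, Q₂ x ^ α := by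
    rw [sum_mul_sum, ← Fintype.sum_prod_type']
    simp only [ENNReal.mul_rpow_of_nonneg _ _ hα₀.le]
  have eC : ∑ z, diagJoint P z ^ α = ∑ x, P x ^ α := by
    rw [sum_prod_eq_sum_diag fun z hz => by simp [diagJoint, hz, ENNReal.zero_rpow_of_pos hα₀]]
    simp [diagJoint]
  rw [relAlphaEnt, if_neg hα₁, eT, eB, eC, ENNReal.log_mul_add]

theorem relAlphaEnt_diagJoint_prod_eq_coe (hP : ∑ x, P x = 1) (hQ₁ : ∑ x, Q₁ x = 1)
    (hQ₂ : ∑ x, Q₂ x = 1) (hα₀ : 0 < α) (hα₁ : α ≠ 1)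
    (hguard : α < 1 → ∀ x, Q₁ x * Q₂ x = 0 → P x = 0)
    (hT : 0 < ∑ x, (P x).toReal * ((Q₁ x).toReal * (Q₂ x).toReal) ^ (α - 1)) :
    relAlphaEnt α (diagJoint P) (fun z => Q₁ z.1 * Q₂ z.2)
      = (diagRelAlphaEnt α (fun x => (P x).toReal) (fun x => (Q₁ x).toReal)
          (fun x => (Q₂ x).toReal) : EReal) := by
  have hTt : ∑ x, P x * (Q₁ x * Q₂ x) ^ (α - 1) ≠ ⊤ :=
    ENNReal.sum_ne_top.2 fun x _ => mul_rpow_ne_top (ne_top_of_sum_eq_one hP x)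
      (ENNReal.mul_ne_top (ne_top_of_sum_eq_one hQ₁ x) (ne_top_of_sum_eq_one hQ₂ x))
      fun h => hguard (by linarith) x
  rw [relAlphaEnt_diagJoint_prod hα₀ hα₁, ENNReal.log_pos_real' (toReal_sum_mul_rpow hTt ▸ hT),
    toReal_sum_mul_rpow hTt, log_sum_rpow_eq_coe hQ₁ hα₀, log_sum_rpow_eq_coe hQ₂ hα₀,
    log_sum_rpow_eq_coe hP hα₀, diagRelAlphaEnt]
  push_cast
  rfl

theorem relAlphaEnt_diagJoint_prod_eq_top (hP : ∑ x, P x = 1) (hQ₁ : ∑ x, Q₁ x = 1)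
    (hQ₂ : ∑ x, Q₂ x = 1) (hα₀ : 0 < α) (hα₁ : α ≠ 1)
    (hT : ((α / (1 - α) : ℝ) : EReal) * ENNReal.log (∑ x, P x * (Q₁ x * Q₂ x) ^ (α - 1)) = ⊤) :
    relAlphaEnt α (diagJoint P) (fun z => Q₁ z.1 * Q₂ z.2) = ⊤ := by
  rw [relAlphaEnt_diagJoint_prod hα₀ hα₁, hT, log_sum_rpow_eq_coe hQ₁ hα₀,
    log_sum_rpow_eq_coe hQ₂ hα₀, log_sum_rpow_eq_coe hP hα₀, ← EReal.coe_add, ← EReal.coe_mul,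
    EReal.top_add_coe, EReal.top_sub_coe]

theorem coe_le_relAlphaEnt_diagJoint_prod (hP : ∑ x, P x = 1) (hQ₁ : ∑ x, Q₁ x = 1)
    (hQ₂ : ∑ x, Q₂ x = 1) (hα₀ : 0 < α) (hα₁ : α ≠ 1) {L : ℝ}
    (hL : (α < 1 → ∀ x, (Q₁ x).toReal * (Q₂ x).toReal = 0 → (P x).toReal = 0) →
      0 < ∑ x, (P x).toReal * ((Q₁ x).toReal * (Q₂ x).toReal) ^ (α - 1) →
      L ≤ diagRelAlphaEnt α (fun x => (P x).toReal) (fun x => (Q₁ x).toReal)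
        (fun x => (Q₂ x).toReal)) :
    (L : EReal) ≤ relAlphaEnt α (diagJoint P) (fun z => Q₁ z.1 * Q₂ z.2) := by
  have hQ : ∀ x, Q₁ x * Q₂ x ≠ ⊤ := fun x =>
    ENNReal.mul_ne_top (ne_top_of_sum_eq_one hQ₁ x) (ne_top_of_sum_eq_one hQ₂ x)
  have of_pos (hguard : α < 1 → ∀ x, Q₁ x * Q₂ x = 0 → P x = 0)
      (hT : 0 < ∑ x, (P x).toReal * ((Q₁ x).toReal * (Q₂ x).toReal) ^ (α - 1)) :
      (L : EReal) ≤ relAlphaEnt α (diagJoint P) (fun z => Q₁ z.1 * Q₂ z.2) := by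
    rw [relAlphaEnt_diagJoint_prod_eq_coe hP hQ₁ hQ₂ hα₀ hα₁ hguard hT, EReal.coe_le_coe_iff]
    exact hL (fun hlt => toReal_eq_zero_of_mul_toReal_eq_zero hQ₁ hQ₂ (hguard hlt)) hT
  have of_top (hT : ((α / (1 - α) : ℝ) : EReal)
      * ENNReal.log (∑ x, P x * (Q₁ x * Q₂ x) ^ (α - 1)) = ⊤) :
      (L : EReal) ≤ relAlphaEnt α (diagJoint P) (fun z => Q₁ z.1 * Q₂ z.2) := by
    rw [relAlphaEnt_diagJoint_prod_eq_top hP hQ₁ hQ₂ hα₀ hα₁ hT]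
    exact le_top
  rcases lt_or_gt_of_ne hα₁ with hlt | hgt
  · by_cases hguard : ∀ x, Q₁ x * Q₂ x = 0 → P x = 0
    · exact of_pos (fun _ => hguard) (toReal_sum_mul_rpow_pos hP hQ₁ hQ₂ hguard _)
    · push Not at hguard
      obtain ⟨x, hx, hPx⟩ := hguard
      refine of_top ?_
      rw [sum_mul_rpow_eq_top (by linarith) hx hPx, ENNReal.log_top,
        EReal.coe_mul_top_of_pos (div_pos hα₀ (by linarith))]
  · by_cases hT : 0 < ∑ x, (P x).toReal * ((Q₁ x).toReal * (Q₂ x).toReal) ^ (α - 1)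
    · exact of_pos (fun h => absurd h (not_lt.2 hgt.le)) hT
    · refine of_top ?_
      have hTt : ∑ x, P x * (Q₁ x * Q₂ x) ^ (α - 1) ≠ ⊤ :=
        ENNReal.sum_ne_top.2 fun x _ => mul_rpow_ne_top (ne_top_of_sum_eq_one hP x) (hQ x)
          fun h => absurd h (by linarith)
      rw [← toReal_sum_mul_rpow hTt, ENNReal.toReal_pos_iff, not_and_or, not_lt, not_lt,
        nonpos_iff_eq_zero, top_le_iff] at hT
      rw [hT.resolve_right hTt, ENNReal.log_zero,
        EReal.coe_mul_bot_of_neg (div_neg_of_pos_of_neg hα₀ (by linarith))]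

end DiagonalJoint

section KullbackLeibler

variable {X : Type*} [Fintype X] [DecidableEq X] {P Q₁ Q₂ : X → ℝ≥0∞}

theorem klDiv_diagJoint_prod (P Q₁ Q₂ : X → ℝ≥0∞) :
    klDiv (diagJoint P) (fun z => Q₁ z.1 * Q₂ z.2)
      = if ∀ x, Q₁ x * Q₂ x = 0 → P x = 0 then
          ((∑ x, (P x).toReal * log ((P x).toReal / ((Q₁ x).toReal * (Q₂ x).toReal)) : ℝ) : EReal)
        else ⊤ := by
  have hcond : (∀ z : X × X, Q₁ z.1 * Q₂ z.2 = 0 → diagJoint P z = 0)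
      ↔ ∀ x, Q₁ x * Q₂ x = 0 → P x = 0 := by
    refine ⟨fun h x hx => by simpa [diagJoint] using h (x, x) hx, fun h ⟨x, y⟩ hxy => ?_⟩
    rcases eq_or_ne x y with rfl | hne
    · simpa [diagJoint] using h x hxy
    · simp [diagJoint, hne]
  rw [klDiv, sum_prod_eq_sum_diag fun z hz => by simp [diagJoint, hz]]
  simp only [hcond]
  simp only [diagJoint, if_true, ENNReal.toReal_mul]

theorem entropy_le_klDiv_diagJoint_prod (hP : ∑ x, P x = 1) (hQ₁ : ∑ x, Q₁ x = 1)
    (hQ₂ : ∑ x, Q₂ x = 1) :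
    ((∑ x, (P x).toReal * log (P x).toReal⁻¹ : ℝ) : EReal)
      ≤ klDiv (diagJoint P) (fun z => Q₁ z.1 * Q₂ z.2) := by
  rw [klDiv_diagJoint_prod]
  split_ifs with hguard
  · have hq := toReal_eq_zero_of_mul_toReal_eq_zero hQ₁ hQ₂ hguard
    have gibbs₁ := sum_mul_log_div_nonneg (fun x => (P x).toReal) (fun x => (Q₁ x).toReal)
      (fun x => ENNReal.toReal_nonneg) (fun x => ENNReal.toReal_nonneg)
      (by rw [sum_toReal_eq_one hP, sum_toReal_eq_one hQ₁])
      fun x h => hq x (by rw [h, zero_mul])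
    have gibbs₂ := sum_mul_log_div_nonneg (fun x => (P x).toReal) (fun x => (Q₂ x).toReal)
      (fun x => ENNReal.toReal_nonneg) (fun x => ENNReal.toReal_nonneg)
      (by rw [sum_toReal_eq_one hP, sum_toReal_eq_one hQ₂])
      fun x h => hq x (by rw [h, mul_zero])
    rw [EReal.coe_le_coe_iff, sum_mul_log_div_mul _ _ _ hq]
    linarith
  · exact le_top

end KullbackLeibler

section DependenceMeasure

theorem Kalpha_eq_of_forall_le_of_eq {X Y : Type*} [Fintype X] [Fintype Y] {α : ℝ}
    {P : X × Y → ℝ≥0∞} {v : EReal}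
    (hle : ∀ (Q₁ : PMFon X) (Q₂ : PMFon Y), v ≤ relAlphaEnt α P (fun z => Q₁.1 z.1 * Q₂.1 z.2))
    (Q₁ : PMFon X) (Q₂ : PMFon Y) (heq : relAlphaEnt α P (fun z => Q₁.1 z.1 * Q₂.1 z.2) = v) :
    Kalpha α P = v :=
  le_antisymm (iInf_le_of_le (Q₁, Q₂) heq.le) (le_iInf fun Q => hle Q.1 Q.2)

theorem renyiEnt_eq_coe {X : Type*} [Fintype X] {P : X → ℝ≥0∞} {β : ℝ} (hβ₀ : 0 < β)
    (hβ₁ : β ≠ 1) (hP : ∑ x, P x = 1) :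
    renyiEnt β P = (((1 - β)⁻¹ * log (∑ x, (P x).toReal ^ β) : ℝ) : EReal) := by
  rw [renyiEnt, if_neg hβ₁, log_sum_rpow_eq_coe hP hβ₀, EReal.coe_mul]

variable {X : Type*} [Fintype X] [DecidableEq X] {α : ℝ} {P : X → ℝ≥0∞}

theorem Kalpha_diagJoint_one (hP : ∑ x, P x = 1) : Kalpha 1 (diagJoint P) = renyiEnt 1 P := by
  rw [renyiEnt, if_pos rfl]
  refine Kalpha_eq_of_forall_le_of_eq (fun Q₁ Q₂ => ?_) ⟨P, hP⟩ ⟨P, hP⟩ ?_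
  · rw [relAlphaEnt, if_pos rfl]
    exact entropy_le_klDiv_diagJoint_prod hP Q₁.2 Q₂.2
  · rw [relAlphaEnt, if_pos rfl, klDiv_diagJoint_prod,
      if_pos fun x h => mul_self_eq_zero.1 h]
    simp only [div_self_mul_self']

theorem relAlphaEnt_diagJoint_escort (hα₀ : 0 < α) (hα₁ : α ≠ 1) (hα₂ : α < 2)
    (hP : ∑ x, P x = 1) :
    relAlphaEnt α (diagJoint P) (fun z => escort (2 - α)⁻¹ P z.1 * escort (2 - α)⁻¹ P z.2)
      = (((2 - α) / (1 - α) * log (∑ x, (P x).toReal ^ (α / (2 - α)))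
          - (1 - α)⁻¹ * log (∑ x, (P x).toReal ^ α) : ℝ) : EReal) := by
  set γ := (2 - α)⁻¹
  have hγ₀ : 0 < γ := inv_pos.2 (by linarith)
  have hZ := sum_toReal_rpow_pos hP γ
  have hZ' := toReal_sum_rpow hP hγ₀.le ▸ hZ
  have hQ := sum_escort hP hγ₀
  have htoReal : ∀ x, (escort γ P x).toReal = (∑ y, (P y).toReal ^ γ)⁻¹ * (P x).toReal ^ γ :=
    fun x => by
      rw [escort, ENNReal.toReal_mul, ENNReal.toReal_inv, toReal_sum_rpow hP hγ₀.le,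
        ENNReal.toReal_rpow]
  have hguard : ∀ x, escort γ P x * escort γ P x = 0 → P x = 0 := fun x hx => by
    rw [ENNReal.toReal_pos_iff] at hZ'
    simpa [escort, hZ'.2.ne, hγ₀, not_lt.2 hγ₀.le] using hx
  obtain ⟨x₀, hx₀⟩ := exists_toReal_pos_of_sum_eq_one hP
  have hp : ∀ x, 0 ≤ (P x).toReal := fun x => ENNReal.toReal_nonneg
  rw [relAlphaEnt_diagJoint_prod_eq_coe hP hQ hQ hα₀ hα₁ (fun _ => hguard), EReal.coe_eq_coe_iff]
  · simp only [htoReal]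
    rw [diagRelAlphaEnt_const_mul hα₁ _ _ (fun x => rpow_nonneg (hp x) _) (inv_pos.2 hZ),
      diagRelAlphaEnt_rpow_inv_two_sub hα₀ hα₁ hα₂ _ hp]
    · exact (sum_pos' (fun x _ => by positivity) ⟨x₀, mem_univ _, by positivity⟩).ne'
    · exact (sum_pos' (fun x _ => by positivity) ⟨x₀, mem_univ _, by positivity⟩).ne'
  · simp only [htoReal]
    exact sum_pos' (fun x _ => by positivity) ⟨x₀, mem_univ _, by positivity⟩

theorem Kalpha_diagJoint_of_lt_two (hα₀ : 0 < α) (hα₁ : α ≠ 1) (hα₂ : α < 2)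
    (hP : ∑ x, P x = 1) :
    Kalpha α (diagJoint P) = ((2 : ℝ) : EReal) * renyiEnt (α / (2 - α)) P - renyiEnt α P := by
  have h2α : 0 < 2 - α := by linarith
  have hβ₁ : α / (2 - α) ≠ 1 := by
    rw [Ne, div_eq_one_iff_eq h2α.ne']
    exact fun h => hα₁ (by linarith)
  have hc : 2 * (1 - α / (2 - α))⁻¹ = (2 - α) / (1 - α) := by
    have h1α : 1 - α ≠ 0 := sub_ne_zero.2 hα₁.symm
    rw [show 1 - α / (2 - α) = 2 * (1 - α) / (2 - α) by field_simp; ring, inv_div]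
    field_simp
  rw [renyiEnt_eq_coe (div_pos hα₀ h2α) hβ₁ hP, renyiEnt_eq_coe hα₀ hα₁ hP, ← EReal.coe_mul,
    ← EReal.coe_sub, ← mul_assoc, hc]
  have hγ : 0 < (2 - α)⁻¹ := inv_pos.2 h2α
  refine Kalpha_eq_of_forall_le_of_eq (fun Q₁ Q₂ => ?_) ⟨_, sum_escort hP hγ⟩
    ⟨_, sum_escort hP hγ⟩ (relAlphaEnt_diagJoint_escort hα₀ hα₁ hα₂ hP)
  refine coe_le_relAlphaEnt_diagJoint_prod hP Q₁.2 Q₂.2 hα₀ hα₁ fun hguard hT => ?_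
  exact le_diagRelAlphaEnt_of_lt_two _ _ _ (fun _ => ENNReal.toReal_nonneg)
    (fun _ => ENNReal.toReal_nonneg) (fun _ => ENNReal.toReal_nonneg) hα₀ hα₁ hα₂ hguard hT

theorem relAlphaEnt_diagJoint_dirac (hα : 1 < α) (hP : ∑ x, P x = 1) {x₀ : X}
    (hx₀ : 0 < (P x₀).toReal) :
    relAlphaEnt α (diagJoint P)
        (fun z => (if z.1 = x₀ then 1 else 0) * (if z.2 = x₀ then 1 else 0))
      = ((α / (1 - α) * log (P x₀).toReal
          - (1 - α)⁻¹ * log (∑ x, (P x).toReal ^ α) : ℝ) : EReal) := by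
  have hδ : ∑ x, (if x = x₀ then 1 else 0 : ℝ≥0∞) = 1 := by simp
  have hα₀ : 0 < α := by linarith
  have hδr : ∀ x, (if x = x₀ then 1 else 0 : ℝ≥0∞).toReal = if x = x₀ then 1 else 0 := fun x => by
    split_ifs <;> simp
  have eT : ∑ x, (P x).toReal * ((if x = x₀ then 1 else 0 : ℝ≥0∞).toReal
      * (if x = x₀ then 1 else 0 : ℝ≥0∞).toReal) ^ (α - 1) = (P x₀).toReal := by
    rw [sum_eq_single x₀ (fun x _ hx => by simp [hx, zero_rpow (by linarith : α - 1 ≠ 0)])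
      (absurd (mem_univ x₀))]
    simp
  rw [relAlphaEnt_diagJoint_prod_eq_coe hP hδ hδ hα₀ hα.ne' (fun h => absurd h (by linarith))
    (eT ▸ hx₀), EReal.coe_eq_coe_iff, diagRelAlphaEnt, eT]
  simp [hδr, zero_rpow hα₀.ne']

theorem Kalpha_diagJoint_of_two_le (hα : 2 ≤ α) (hP : ∑ x, P x = 1) :
    Kalpha α (diagJoint P) = ((α / (α - 1) : ℝ) : EReal) * minEnt P - renyiEnt α P := by
  have hα₀ : 0 < α := by linarith
  have hα₁ : 1 < α := by linarith
  obtain ⟨x₁, hx₁⟩ := exists_toReal_pos_of_sum_eq_one hP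
  have : Nonempty X := ⟨x₁⟩
  obtain ⟨x₀, hx₀⟩ := exists_eq_ciSup_of_finite (f := P)
  have hm : ∀ x, (P x).toReal ≤ (P x₀).toReal := fun x =>
    ENNReal.toReal_mono (ne_top_of_sum_eq_one hP x₀) (hx₀ ▸ le_iSup P x)
  have hm₀ : 0 < (P x₀).toReal := hx₁.trans_le (hm x₁)
  have hc : α / (α - 1) * -log (P x₀).toReal = α / (1 - α) * log (P x₀).toReal := by
    rw [← neg_sub, div_neg, neg_mul_neg]
  rw [minEnt, ← hx₀, ENNReal.log_pos_real' hm₀, renyiEnt_eq_coe hα₀ hα₁.ne' hP,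
    ← EReal.coe_neg, ← EReal.coe_mul, ← EReal.coe_sub, hc]
  have hδ : ∑ x, (if x = x₀ then 1 else 0 : ℝ≥0∞) = 1 := by simp
  refine Kalpha_eq_of_forall_le_of_eq (fun Q₁ Q₂ => ?_) ⟨_, hδ⟩ ⟨_, hδ⟩
    (relAlphaEnt_diagJoint_dirac hα₁ hP hm₀)
  refine coe_le_relAlphaEnt_diagJoint_prod hP Q₁.2 Q₂.2 hα₀ hα₁.ne' fun _ hT => ?_
  exact le_diagRelAlphaEnt_of_two_le _ _ _ (fun _ => ENNReal.toReal_nonneg)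
    (fun _ => ENNReal.toReal_nonneg) (fun _ => ENNReal.toReal_nonneg) hα hm hT

end DependenceMeasure

/-- `K_α(X;X) = 2 H_{α/(2-α)}(X) - H_α(X)` for `α ∈ (0,2)` and
`K_α(X;X) = (α/(α-1)) H_∞(X) - H_α(X)` for `α ≥ 2`. -/
theorem stmt19 {X : Type*} [Fintype X] [DecidableEq X] (P : X → ℝ≥0∞) (hP : ∑ x, P x = 1) (α : ℝ) :
    (0 < α → α < 2 →
      Kalpha α (fun p : X × X => if p.1 = p.2 then P p.1 else 0) =
        ((2 : ℝ) : EReal) * renyiEnt (α / (2 - α)) P - renyiEnt α P) ∧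
    (2 ≤ α →
      Kalpha α (fun p : X × X => if p.1 = p.2 then P p.1 else 0) =
        ((α / (α - 1) : ℝ) : EReal) * minEnt P - renyiEnt α P) := by
  refine ⟨fun hα₀ hα₂ => ?_, fun hα₂ => Kalpha_diagJoint_of_two_le hα₂ hP⟩
  rcases eq_or_ne α 1 with rfl | hα₁
  · refine (Kalpha_diagJoint_one hP).trans ?_
    rw [show (1 : ℝ) / (2 - 1) = 1 by norm_num, renyiEnt, if_pos rfl]
    norm_cast
    ring
  · exact Kalpha_diagJoint_of_lt_two hα₀ hα₁ hα₂ hP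
end
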